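/- arXiv:2507.21818 — 5 statements merged into one kernel-verified Lean document; each statement's English description precedes it below -/
import Mathlib

section
/- Let $\Phi \in H^\infty_{\mathcal{B}(E_2, E)}(\mathbb{T})$ be an inner function and let $\mathcal{G}_\Phi = \{(g, y) \in H^2_E(\mathbb{T}) \oplus E : g = (\Phi x - \sigma y)/(z - e^{i\theta}) \text{ for some } x \in E_2\}$. If $(g, y) \in \mathcal{G}_\Phi$ is nonzero, then $g$ lies in the model space $\mathcal{K}_\Phi = H^2_E(\mathbb{T}) \ominus \Phi H^2_{E_2}(\mathbb{T})$. -/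
open Complex

noncomputable section
set_option linter.unusedSectionVars false

/-- The `E`-valued Hardy space `H²_E(𝕋)`, modeled by the ℓ² space of its
Taylor/Fourier coefficient sequences. -/
abbrev Hardy (E : Type*) [NormedAddCommGroup E] [InnerProductSpace ℂ E] [CompleteSpace E] :=
  lp (fun _ : ℕ => E) 2

variable {E : Type*} [NormedAddCommGroup E] [InnerProductSpace ℂ E] [CompleteSpace E]

def shiftSeq (f : ℕ → E) : ℕ → E
  | 0 => 0
  | n + 1 => f n

lemma memℓp_shiftSeq {f : ℕ → E} (hf : Memℓp f 2) : Memℓp (shiftSeq f) 2 := by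
  have h := hf.summable (by norm_num)
  exact memℓp_gen ((summable_nat_add_iff 1).mp (by simpa [shiftSeq] using h))

/-- The shift `S_E : f ↦ z f` on `H²_E(𝕋)`. -/
def shiftOp (f : Hardy E) : Hardy E := ⟨shiftSeq f, memℓp_shiftSeq (lp.memℓp f)⟩

/-- The inclusion `i_E : E → H²_E(𝕋)` sending `x` to the constant function `x`. -/
def inclOp (y : E) : Hardy E := lp.single 2 (0 : ℕ) y

/-- The Brownian shift `B^E_{σ, e^{iθ}}` of covariance `σ` and angle `θ` on
`H²_E(𝕋) ⊕ E`: `(f, y) ↦ (zf + σ y, e^{iθ} y)`. -/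
def BS (σ θ : ℝ) (v : Hardy E × E) : Hardy E × E :=
  (shiftOp v.1 + (σ : ℂ) • inclOp v.2, Complex.exp (θ * I) • v.2)

/-! Pairing the defining identity `z g + σ y = e^{iθ} g + Φ x` with `Φ z h` kills the constant
terms (the shift is an isometry with range orthogonal to the constants, and `Φ` is an isometry),
leaving `⟨Φ h, g⟩ = e^{iθ} ⟨Φ z h, g⟩`. Hence `|⟨Φ h, g⟩| = |⟨zⁿ Φ h, g⟩|` for every `n`, and the
right-hand side tends to `0` because the adjoint of `zⁿ` drops the first `n` coefficients of `g`. -/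

local notation "⟪" x ", " y "⟫" => inner (𝕜 := ℂ) x y

def tailLp (n : ℕ) (g : Hardy E) : Hardy E :=
  ⟨fun j => g (j + n), memℓp_gen ((summable_nat_add_iff n).mpr
    ((lp.memℓp g).summable (p := 2) (by norm_num)))⟩

lemma tailLp_apply (n : ℕ) (g : Hardy E) (j : ℕ) : (tailLp n g : ℕ → E) j = g (j + n) := rfl

lemma inner_shiftOp_left (u w : Hardy E) : ⟪shiftOp u, w⟫ = ⟪u, tailLp 1 w⟫ := by
  rw [lp.inner_eq_tsum, lp.inner_eq_tsum,
    Summable.tsum_eq_zero_add (lp.summable_inner (𝕜 := ℂ) (shiftOp u) w)]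
  simp only [shiftOp, shiftSeq, inner_zero_left, zero_add, tailLp_apply]

lemma inner_shiftOp_shiftOp (u v : Hardy E) : ⟪shiftOp u, shiftOp v⟫ = ⟪u, v⟫ := by
  rw [inner_shiftOp_left]
  rfl

lemma inner_shiftOp_inclOp (u : Hardy E) (y : E) : ⟪shiftOp u, inclOp y⟫ = 0 := by
  rw [inclOp, lp.inner_single_right]
  exact inner_zero_left _

lemma inner_shiftOp_iterate (n : ℕ) (u g : Hardy E) :
    ⟪shiftOp^[n] u, g⟫ = ⟪u, tailLp n g⟫ := by
  induction n generalizing g with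
  | zero => rfl
  | succ n ih => rw [Function.iterate_succ_apply', inner_shiftOp_left, ih]; rfl

lemma tendsto_norm_tailLp (g : Hardy E) :
    Filter.Tendsto (fun n => ‖tailLp n g‖) Filter.atTop (nhds 0) := by
  have htail := tendsto_sum_nat_add fun j => ‖(g : ℕ → E) j‖ ^ (2 : ℝ)
  have hroot : ContinuousAt (fun t : ℝ => t ^ ((1 : ℝ) / 2)) 0 :=
    Real.continuousAt_rpow_const 0 _ (Or.inr (by norm_num))
  have hlim := hroot.tendsto.comp htail
  rw [Real.zero_rpow (by norm_num)] at hlim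
  refine hlim.congr fun n => ?_
  rw [lp.norm_eq_tsum_rpow (by norm_num) (tailLp n g)]
  norm_num [tailLp_apply]

lemma tendsto_inner_shiftOp_iterate (u g : Hardy E) :
    Filter.Tendsto (fun n => ⟪shiftOp^[n] u, g⟫) Filter.atTop (nhds 0) := by
  refine squeeze_zero_norm (fun n => ?_) (by simpa using (tendsto_norm_tailLp g).const_mul ‖u‖)
  rw [inner_shiftOp_iterate]
  exact norm_inner_le_norm _ _

section Isometry

variable {E₂ : Type*} [NormedAddCommGroup E₂] [InnerProductSpace ℂ E₂] [CompleteSpace E₂]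
  {T : Hardy E₂ →ₗᵢ[ℂ] Hardy E} {σ θ : ℝ} {g : Hardy E} {y : E} {x : E₂}

lemma inner_map_eq_exp_mul_inner_map_shiftOp (hT : Function.Semiconj T shiftOp shiftOp)
    (heq : shiftOp g + (σ : ℂ) • inclOp y = Complex.exp (θ * I) • g + T (inclOp x))
    (h : Hardy E₂) : ⟪T h, g⟫ = Complex.exp (θ * I) * ⟪T (shiftOp h), g⟫ := by
  have hpair := congrArg (⟪T (shiftOp h), ·⟫) heq
  rw [inner_add_right, inner_add_right, inner_smul_right, inner_smul_right, T.inner_map_map,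
    inner_shiftOp_inclOp, add_zero, hT h, inner_shiftOp_shiftOp, inner_shiftOp_inclOp, mul_zero,
    add_zero] at hpair
  rwa [← hT h] at hpair

lemma norm_inner_map_eq_norm_inner_shiftOp_iterate (hT : Function.Semiconj T shiftOp shiftOp)
    (heq : shiftOp g + (σ : ℂ) • inclOp y = Complex.exp (θ * I) • g + T (inclOp x))
    (h : Hardy E₂) (n : ℕ) : ‖⟪T h, g⟫‖ = ‖⟪shiftOp^[n] (T h), g⟫‖ := by
  rw [← hT.iterate_right n h]
  induction n with
  | zero => rfl
  | succ n ih =>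
    rw [ih, inner_map_eq_exp_mul_inner_map_shiftOp hT heq, norm_mul,
      Complex.norm_exp_ofReal_mul_I, one_mul, Function.iterate_succ_apply']

end Isometry

theorem defect_vector_in_model_space_general
    {E₂ : Type*} [NormedAddCommGroup E₂] [InnerProductSpace ℂ E₂] [CompleteSpace E₂]
    (σ θ : ℝ) (T : Hardy E₂ →L[ℂ] Hardy E)
    (hTiso : ∀ h : Hardy E₂, ‖T h‖ = ‖h‖)
    (hTcomm : ∀ h : Hardy E₂, T (shiftOp h) = shiftOp (T h))
    (g : Hardy E) (y : E) (x : E₂)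
    (heq : shiftOp g + (σ : ℂ) • inclOp y = Complex.exp (θ * I) • g + T (inclOp x)) :
    ∀ h : Hardy E₂, inner (𝕜 := ℂ) (T h) g = 0 := by
  let Φ : Hardy E₂ →ₗᵢ[ℂ] Hardy E := ⟨T.toLinearMap, hTiso⟩
  have hΦ : Function.Semiconj Φ shiftOp shiftOp := hTcomm
  intro h
  have hconst : Filter.Tendsto (fun n => ‖⟪shiftOp^[n] (Φ h), g⟫‖) Filter.atTop
      (nhds ‖⟪Φ h, g⟫‖) := by
    simpa only [← norm_inner_map_eq_norm_inner_shiftOp_iterate hΦ heq h] using tendsto_const_nhds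
  have hzero := (tendsto_inner_shiftOp_iterate (Φ h) g).norm
  rw [norm_zero] at hzero
  exact norm_eq_zero.mp (tendsto_nhds_unique hconst hzero)

/-- Lemma 2.2 (first part): if `(g, y) ∈ 𝒢_Φ` is nonzero, where `Φ` is an inner
multiplier (modeled by an isometric multiplication operator `T` commuting with the shift),
then `g` lies in the model space `𝒦_Φ = H²_E ⊖ Φ H²_{E₂}`. -/
theorem defect_vector_in_model_space
    {E₂ : Type*} [NormedAddCommGroup E₂] [InnerProductSpace ℂ E₂] [CompleteSpace E₂]
    (σ θ : ℝ) (hσ : 0 < σ) (hθ : θ ∈ Set.Ico 0 (2 * Real.pi))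
    (T : Hardy E₂ →L[ℂ] Hardy E)
    (hTiso : ∀ h : Hardy E₂, ‖T h‖ = ‖h‖)
    (hTcomm : ∀ h : Hardy E₂, T (shiftOp h) = shiftOp (T h))
    (g : Hardy E) (y : E) (hne : ¬(g = 0 ∧ y = 0)) (x : E₂)
    (heq : shiftOp g + (σ : ℂ) • inclOp y = Complex.exp (θ * I) • g + T (inclOp x)) :
    ∀ h : Hardy E₂, inner (𝕜 := ℂ) (T h) g = 0 :=
  defect_vector_in_model_space_general σ θ T hTiso hTcomm g y x heq
end
end

section
/- Let $\Phi \in H^\infty_{\mathcal{B}(E_2, E)}(\mathbb{T})$ be inner, $\sigma > 0$, $\theta \in [0, 2\pi)$. If $(g, y) \in \mathcal{G}_\Phi$ (i.e., $zg + \sigma y = e^{i\theta} g + \Phi x$ for some $x \in E_2$) and $y = 0$, then $g = 0$ and $x = 0$. -/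
/-!
With `y = 0` the relation reads `S g = e^{iθ} g + u` for the shift `S` and `u = T x`. Since `T` is
an isometry commuting with `S`, the vectors `Sᵏ u = T (zᵏ x)` are pairwise orthogonal of norm `‖x‖`,
i.e. `u` is a wandering vector of `S`. Pairing the relation with `Sᵏ⁺¹ u` shows that
`|⟪Sᵏ u, g⟫|` does not depend on `k`, so Bessel's inequality forces `u ⟂ g`. Then
`‖g‖² = ‖S g‖² = ‖g‖² + ‖u‖²`, so `u = 0` and `x = 0`; finally `S g = e^{iθ} g` forces `g = 0`
because the shift has no eigenvectors.
-/

open Complex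

noncomputable section
set_option linter.unusedSectionVars false

variable {E : Type*} [NormedAddCommGroup E] [InnerProductSpace ℂ E] [CompleteSpace E]

open scoped InnerProductSpace

section Wandering

variable {H K : Type*} [NormedAddCommGroup H] [InnerProductSpace ℂ H]
  [NormedAddCommGroup K] [InnerProductSpace ℂ K]

def IsWandering (S : H →ₗᵢ[ℂ] H) (u : H) : Prop :=
  ∀ k : ℕ, ⟪u, (S ^ (k + 1)) u⟫_ℂ = 0

theorem Orthonormal.eq_zero_of_forall_norm_inner_eq {ι : Type*} [Infinite ι] {v : ι → H}
    (hv : Orthonormal ℂ v) {g : H} {c : ℝ} (h : ∀ i, ‖⟪v i, g⟫_ℂ‖ = c) : c = 0 := by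
  have hsum := hv.inner_products_summable g
  simp only [h] at hsum
  exact pow_eq_zero_iff two_ne_zero |>.mp <| (summable_const_iff _).mp hsum

namespace IsWandering

variable {S : H →ₗᵢ[ℂ] H} {u : H}

theorem inner_pow_apply_pow_apply_of_lt (hu : IsWandering S u) {i j : ℕ} (hij : i < j) :
    ⟪(S ^ i) u, (S ^ j) u⟫_ℂ = 0 := by
  obtain ⟨k, rfl⟩ := Nat.exists_eq_add_of_lt hij
  rw [add_assoc, pow_add, LinearIsometry.coe_mul, Function.comp_apply,
    LinearIsometry.inner_map_map]
  exact hu k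

theorem orthonormal_smul_pow_apply (hu : IsWandering S u) (hu0 : u ≠ 0) :
    Orthonormal ℂ (fun k : ℕ => ((‖u‖⁻¹ : ℝ) : ℂ) • (S ^ k) u) := by
  refine ⟨fun k => ?_, fun i j hij => ?_⟩
  · rw [norm_smul, LinearIsometry.norm_map, Complex.norm_real, Real.norm_eq_abs,
      abs_inv, abs_norm, inv_mul_cancel₀ (norm_ne_zero_iff.mpr hu0)]
  · simp only [inner_smul_left, inner_smul_right]
    rcases lt_or_gt_of_ne hij with h | h
    · rw [hu.inner_pow_apply_pow_apply_of_lt h, mul_zero, mul_zero]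
    · rw [inner_eq_zero_symm.mp (hu.inner_pow_apply_pow_apply_of_lt h), mul_zero, mul_zero]

variable {g : H} {c : ℂ}

theorem norm_inner_pow_apply_eq (hu : IsWandering S u) (hc : ‖c‖ = 1) (h : S g = c • g + u)
    (k : ℕ) : ‖⟪(S ^ k) u, g⟫_ℂ‖ = ‖⟪u, g⟫_ℂ‖ := by
  induction k with
  | zero => rfl
  | succ k ih =>
    have hstep : ⟪(S ^ (k + 1)) u, S g⟫_ℂ = ⟪(S ^ k) u, g⟫_ℂ := by
      rw [pow_succ', LinearIsometry.coe_mul, Function.comp_apply,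
        LinearIsometry.inner_map_map]
    rw [h, inner_add_right, inner_smul_right, inner_eq_zero_symm.mp (hu k), add_zero] at hstep
    rw [← ih, ← hstep, norm_mul, hc, one_mul]

theorem inner_eq_zero_of_apply_eq_smul_add (hu : IsWandering S u) (hc : ‖c‖ = 1)
    (h : S g = c • g + u) : ⟪u, g⟫_ℂ = 0 := by
  rcases eq_or_ne u 0 with rfl | hu0
  · exact inner_zero_left g
  have hconst := (hu.orthonormal_smul_pow_apply hu0).eq_zero_of_forall_norm_inner_eq
    (c := ‖u‖⁻¹ * ‖⟪u, g⟫_ℂ‖) fun k => by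
      rw [inner_smul_left, norm_mul, Complex.norm_conj, Complex.norm_real, Real.norm_eq_abs,
        abs_inv, abs_norm, hu.norm_inner_pow_apply_eq hc h]
  simpa [hu0] using hconst

theorem eq_zero_of_apply_eq_smul_add (hu : IsWandering S u) (hc : ‖c‖ = 1)
    (h : S g = c • g + u) : u = 0 := by
  have horth : ⟪c • g, u⟫_ℂ = 0 := by
    rw [inner_smul_left, inner_eq_zero_symm.mp (hu.inner_eq_zero_of_apply_eq_smul_add hc h),
      mul_zero]
  have hpyth := norm_add_sq_eq_norm_sq_add_norm_sq_of_inner_eq_zero _ _ horth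
  rw [← h, LinearIsometry.norm_map, norm_smul, hc, one_mul] at hpyth
  exact norm_eq_zero.mp (mul_self_eq_zero.mp (by linarith))

theorem map {S' : K →ₗᵢ[ℂ] K} (T : H →ₗᵢ[ℂ] K) (hT : ∀ h, T (S h) = S' (T h))
    (hu : IsWandering S u) : IsWandering S' (T u) := by
  have hpow : ∀ k h, T ((S ^ k) h) = (S' ^ k) (T h) := by
    intro k h
    induction k generalizing h with
    | zero => rfl
    | succ k ih =>
      rw [pow_succ, LinearIsometry.coe_mul, Function.comp_apply, ih, hT]
      rfl
  intro k
  rw [← hpow, LinearIsometry.inner_map_map]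
  exact hu k

end IsWandering

end Wandering

theorem inner_shiftOp (u v : Hardy E) : ⟪shiftOp u, shiftOp v⟫_ℂ = ⟪u, v⟫_ℂ := by
  rw [lp.inner_eq_tsum, lp.inner_eq_tsum,
    (lp.summable_inner (𝕜 := ℂ) (shiftOp u) (shiftOp v)).tsum_eq_zero_add]
  simp [shiftOp, shiftSeq]

def shiftOpₗᵢ : Hardy E →ₗᵢ[ℂ] Hardy E :=
  LinearMap.isometryOfInner
    { toFun := shiftOp
      map_add' := fun u v => by
        ext (_ | n) <;> simp only [shiftOp, lp.coeFn_add, Pi.add_apply, shiftSeq, add_zero]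
      map_smul' := fun c u => by
        ext (_ | n) <;> simp only [shiftOp, lp.coeFn_smul, Pi.smul_apply, shiftSeq, smul_zero,
          RingHom.id_apply] }
    inner_shiftOp

@[simp]
theorem shiftOpₗᵢ_apply (u : Hardy E) : shiftOpₗᵢ u = shiftOp u := rfl

theorem pow_shiftOpₗᵢ_single (k n : ℕ) (x : E) :
    (shiftOpₗᵢ ^ k) (lp.single 2 n x) = lp.single 2 (n + k) x := by
  induction k with
  | zero => rfl
  | succ k ih =>
    rw [pow_succ', LinearIsometry.coe_mul, Function.comp_apply, ih, shiftOpₗᵢ_apply]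
    ext (_ | m) <;> simp [shiftOp, shiftSeq, lp.single_apply, Pi.single_apply, ← add_assoc]

theorem isWandering_inclOp (x : E) : IsWandering shiftOpₗᵢ (inclOp x) := by
  intro k
  rw [inclOp, pow_shiftOpₗᵢ_single, lp.inner_single_left, lp.single_apply_ne _ _ _ (by omega),
    inner_zero_right]

theorem eq_zero_of_shiftOp_eq_smul {c : ℂ} {g : Hardy E} (h : shiftOp g = c • g) : g = 0 := by
  have hcoord (n : ℕ) : shiftSeq (g : ℕ → E) n = c • (g : ℕ → E) n := by
    simpa [shiftOp] using congrArg (fun f : Hardy E => (f : ℕ → E) n) h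
  rcases eq_or_ne c 0 with rfl | hc
  · ext n
    simpa [shiftSeq] using hcoord (n + 1)
  · ext n
    induction n with
    | zero => simpa [shiftSeq, hc] using (hcoord 0).symm
    | succ n ih => simpa [shiftSeq, ih, hc] using (hcoord (n + 1)).symm

theorem defect_vector_zero_of_snd_zero_general
    {E₂ : Type*} [NormedAddCommGroup E₂] [InnerProductSpace ℂ E₂] [CompleteSpace E₂]
    (σ θ : ℝ)
    (T : Hardy E₂ →L[ℂ] Hardy E)
    (hTiso : ∀ h : Hardy E₂, ‖T h‖ = ‖h‖)
    (hTcomm : ∀ h : Hardy E₂, T (shiftOp h) = shiftOp (T h))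
    (g : Hardy E) (y : E) (x : E₂)
    (heq : shiftOp g + (σ : ℂ) • inclOp y = Complex.exp (θ * I) • g + T (inclOp x))
    (hy : y = 0) :
    g = 0 ∧ x = 0 := by
  subst hy
  rw [inclOp, lp.single_zero, smul_zero, add_zero] at heq
  have hwandering : IsWandering shiftOpₗᵢ (T (inclOp x)) :=
    (isWandering_inclOp x).map ⟨T.toLinearMap, hTiso⟩ hTcomm
  have hTx : T (inclOp x) = 0 := hwandering.eq_zero_of_apply_eq_smul_add
    (norm_exp_ofReal_mul_I θ) heq
  have hx : x = 0 := by
    rw [← norm_eq_zero, ← lp.norm_single (E := fun _ : ℕ => E₂) two_pos 0 x, ← inclOp, ← hTiso,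
      hTx, norm_zero]
  rw [hTx, add_zero] at heq
  exact ⟨eq_zero_of_shiftOp_eq_smul heq, hx⟩

/-- Lemma 2.2 (second part): if `(g, y) ∈ 𝒢_Φ` with witness `x` and `y = 0`,
then `g = 0` and `x = 0`. -/
theorem defect_vector_zero_of_snd_zero
    {E₂ : Type*} [NormedAddCommGroup E₂] [InnerProductSpace ℂ E₂] [CompleteSpace E₂]
    (σ θ : ℝ) (hσ : 0 < σ) (hθ : θ ∈ Set.Ico 0 (2 * Real.pi))
    (T : Hardy E₂ →L[ℂ] Hardy E)
    (hTiso : ∀ h : Hardy E₂, ‖T h‖ = ‖h‖)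
    (hTcomm : ∀ h : Hardy E₂, T (shiftOp h) = shiftOp (T h))
    (g : Hardy E) (y : E) (x : E₂)
    (heq : shiftOp g + (σ : ℂ) • inclOp y = Complex.exp (θ * I) • g + T (inclOp x))
    (hy : y = 0) :
    g = 0 ∧ x = 0 :=
  defect_vector_zero_of_snd_zero_general σ θ T hTiso hTcomm g y x heq hy
end
end

section
/- Let $\mathcal{M}$ be a closed subspace of $H^2_E(\mathbb{T}) \oplus E$ invariant under $B^E_{\sigma, e^{i\theta}}$ with $\mathcal{M} \not\subseteq H^2_E(\mathbb{T}) \oplus \{0\}$. Then $\mathcal{M}_0 := \mathcal{M} \cap (H^2_E(\mathbb{T}) \oplus \{0\})$ is nonzero. -/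
open Complex

noncomputable section
set_option linter.unusedSectionVars false

variable {E : Type*} [NormedAddCommGroup E] [InnerProductSpace ℂ E] [CompleteSpace E]

/-!
The vector `B v - e^{iθ} v` lies in `M` and in `H²_E(𝕋) ⊕ {0}`. If it vanished, the Hardy
component `f` of `v` would solve `z f + σ x = e^{iθ} f`, i.e. `f = σ x / (e^{iθ} - z)`; comparing
coefficients, all Taylor coefficients of `f` then have norm `σ ‖x‖`, which is impossible in `ℓ²`
unless `x = 0`.
-/

lemma Memℓp.eq_zero_of_forall_norm_eq {F : Type*} [NormedAddCommGroup F] {p : ENNReal}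
    (hp : 0 < p.toReal) {f : ℕ → F} (hf : Memℓp f p) {r : ℝ} (hr : ∀ n, ‖f n‖ = r) : r = 0 := by
  have hsum : Summable fun _ : ℕ => r ^ p.toReal := by simpa only [hr] using hf.summable hp
  have hr0 : 0 ≤ r := hr 0 ▸ norm_nonneg _
  exact (Real.rpow_eq_zero hr0 hp.ne').mp (summable_const_iff _ |>.mp hsum)

lemma shiftOp_add_inclOp_apply_zero (f : Hardy E) (y : E) : (shiftOp f + inclOp y) 0 = y := by
  change shiftSeq f 0 + (inclOp y : ℕ → E) 0 = y
  simp [shiftSeq, inclOp]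

lemma shiftOp_add_inclOp_apply_succ (f : Hardy E) (y : E) (n : ℕ) :
    (shiftOp f + inclOp y) (n + 1) = f n := by
  change shiftSeq f (n + 1) + (inclOp y : ℕ → E) (n + 1) = f n
  simp [shiftSeq, inclOp, lp.single_apply]

lemma norm_apply_eq_of_shiftOp_add_inclOp_eq_smul {f : Hardy E} {y : E} {c : ℂ} (hc : ‖c‖ = 1)
    (h : shiftOp f + inclOp y = c • f) (n : ℕ) : ‖f n‖ = ‖y‖ := by
  have hcoeff (k : ℕ) : (shiftOp f + inclOp y) k = c • f k := by rw [h]; rfl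
  induction n with
  | zero => simpa [shiftOp_add_inclOp_apply_zero, norm_smul, hc] using congrArg norm (hcoeff 0).symm
  | succ n ih => simpa [shiftOp_add_inclOp_apply_succ, norm_smul, hc, ih] using congrArg norm (hcoeff (n + 1)).symm

lemma shiftOp_add_inclOp_ne_smul {f : Hardy E} {y : E} {c : ℂ} (hc : ‖c‖ = 1) (hy : y ≠ 0) :
    shiftOp f + inclOp y ≠ c • f := fun h =>
  hy <| norm_eq_zero.mp <| (lp.memℓp f).eq_zero_of_forall_norm_eq (by norm_num)
    (norm_apply_eq_of_shiftOp_add_inclOp_eq_smul hc h)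

lemma BS_sub_smul_fst (σ θ : ℝ) (v : Hardy E × E) :
    (BS σ θ v - exp (θ * I) • v).1 = shiftOp v.1 + inclOp ((σ : ℂ) • v.2) - exp (θ * I) • v.1 := by
  simp only [BS, inclOp, lp.single_smul, Prod.fst_sub, Prod.smul_fst]

lemma BS_sub_smul_snd (σ θ : ℝ) (v : Hardy E × E) : (BS σ θ v - exp (θ * I) • v).2 = 0 := by
  simp [BS]

theorem typeII_M0_nonzero_general
    (σ θ : ℝ) (hσ : 0 < σ)
    (M : Submodule ℂ (Hardy E × E))
    (hMinv : ∀ v ∈ M, BS σ θ v ∈ M)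
    (hMsub : ∃ v ∈ M, v.2 ≠ 0) :
    ∃ v ∈ M, v ≠ 0 ∧ v.2 = 0 := by
  obtain ⟨v, hvM, hx⟩ := hMsub
  refine ⟨BS σ θ v - exp (θ * I) • v, M.sub_mem (hMinv v hvM) (M.smul_mem _ hvM), ?_,
    BS_sub_smul_snd σ θ v⟩
  intro h0
  have hσx : (σ : ℂ) • v.2 ≠ 0 := smul_ne_zero (by exact_mod_cast hσ.ne') hx
  refine shiftOp_add_inclOp_ne_smul (norm_exp_ofReal_mul_I θ) hσx (f := v.1) ?_
  rw [← sub_eq_zero, ← BS_sub_smul_fst, h0, Prod.fst_zero]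

/-- First step of Theorem 2.4: if `M` is a closed invariant subspace of the Brownian shift
not contained in `H²_E(𝕋) ⊕ {0}`, then `M₀ = M ∩ (H²_E(𝕋) ⊕ {0})` is nonzero. -/
theorem typeII_M0_nonzero
    (σ θ : ℝ) (hσ : 0 < σ) (hθ : θ ∈ Set.Ico 0 (2 * Real.pi))
    (M : Submodule ℂ (Hardy E × E)) (hMc : IsClosed (M : Set (Hardy E × E)))
    (hMinv : ∀ v ∈ M, BS σ θ v ∈ M)
    (hMsub : ∃ v ∈ M, v.2 ≠ 0) :
    ∃ v ∈ M, v ≠ 0 ∧ v.2 = 0 :=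
  typeII_M0_nonzero_general σ θ hσ M hMinv hMsub
end
end

section
/- Let $E$ be a Hilbert space and $B = B^E_{\sigma, e^{i\theta}}$ the Brownian shift on $\mathcal{H} = H^2_E(\mathbb{T}) \oplus E$. If $\mathcal{M} \subseteq \mathcal{H}$ is a closed subspace reducing $B$ (invariant under both $B$ and $B^*$) and $(f, x) \in \mathcal{M}$, then $(0, x) \in \mathcal{M}$, $(x, 0) \in \mathcal{M}$ (identifying $x$ with the constant function), and $(f, 0) \in \mathcal{M}$. -/
/-!
The identity `B^*B = 1 + σ² P_E`, with `P_E` the projection onto the `E`-summand, shows that a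
subspace reducing `B` is invariant under `P_E`, so `(f, x) ∈ M` gives `(0, x) ∈ M` and
`(f, 0) ∈ M`. Then `B (0, x) - e^{iθ} (0, x) = σ (x, 0)` gives `(x, 0) ∈ M`.
-/

open Complex

noncomputable section
set_option linter.unusedSectionVars false

variable {E : Type*} [NormedAddCommGroup E] [InnerProductSpace ℂ E] [CompleteSpace E]

lemma memℓp_tailSeq {f : ℕ → E} (hf : Memℓp f 2) : Memℓp (fun n => f (n + 1)) 2 := by
  have h := hf.summable (by norm_num)
  exact memℓp_gen ((summable_nat_add_iff 1).2 h)

/-- The backward shift `S_E^* : f ↦ (f - f(0))/z` on `H²_E(𝕋)`. -/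
def tailOp (f : Hardy E) : Hardy E := ⟨fun n => f (n + 1), memℓp_tailSeq (lp.memℓp f)⟩

/-- The adjoint of the Brownian shift: `(f, y) ↦ (S_E^* f, σ f̂(0) + e^{-iθ} y)`. -/
def BSadj (σ θ : ℝ) (v : Hardy E × E) : Hardy E × E :=
  (tailOp v.1, (σ : ℂ) • (v.1 : ℕ → E) 0 + Complex.exp (-(θ * I)) • v.2)

@[simp]
lemma shiftOp_apply_zero (f : Hardy E) : shiftOp f 0 = 0 := rfl

@[simp]
lemma shiftOp_apply_succ (f : Hardy E) (n : ℕ) : shiftOp f (n + 1) = f n := rfl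

@[simp]
lemma tailOp_apply (f : Hardy E) (n : ℕ) : tailOp f n = f (n + 1) := rfl

@[simp]
lemma shiftOp_zero : shiftOp (0 : Hardy E) = 0 := by
  ext (_ | n) <;> rfl

lemma tailOp_add (f g : Hardy E) : tailOp (f + g) = tailOp f + tailOp g := by
  ext n; simp

lemma tailOp_smul (c : ℂ) (f : Hardy E) : tailOp (c • f) = c • tailOp f := by
  ext n; simp

@[simp]
lemma tailOp_shiftOp (f : Hardy E) : tailOp (shiftOp f) = f := by
  ext n; simp

@[simp]
lemma tailOp_inclOp (y : E) : tailOp (inclOp y) = 0 := by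
  ext n; simp [inclOp, lp.single_apply]

@[simp]
lemma inclOp_apply_zero (y : E) : inclOp y 0 = y := by
  simp [inclOp]

section Brownian

variable (σ θ : ℝ)

lemma BS_fst_apply_zero (v : Hardy E × E) : ((BS σ θ v).1 : ℕ → E) 0 = (σ : ℂ) • v.2 := by
  change ((shiftOp v.1 + (σ : ℂ) • inclOp v.2 : Hardy E) : ℕ → E) 0 = _
  rw [lp.coeFn_add, lp.coeFn_smul, Pi.add_apply, Pi.smul_apply, shiftOp_apply_zero,
    inclOp_apply_zero, zero_add]

lemma BSadj_BS (v : Hardy E × E) :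
    BSadj σ θ (BS σ θ v) = v + (σ : ℂ) ^ 2 • ((0 : Hardy E), v.2) := by
  -- `Complex.coe_smul` would turn the scalar `(σ : ℂ)` into a real one that `tailOp_smul` misses.
  ext1
  · simp [BS, BSadj, tailOp_add, tailOp_smul, -Complex.coe_smul]
  · simp only [BSadj, BS_fst_apply_zero]
    simp [BS, smul_smul, Complex.exp_neg, sq, -Complex.coe_smul]
    abel

lemma BS_zero_prod (y : E) :
    BS σ θ (0, y) = (σ : ℂ) • (inclOp y, (0 : E)) + Complex.exp (θ * I) • ((0 : Hardy E), y) := by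
  simp [BS]

variable {σ θ} (M : Submodule ℂ (Hardy E × E))

lemma zero_prod_mem_of_reducing (hσ : σ ≠ 0) (hB : ∀ v ∈ M, BS σ θ v ∈ M)
    (hBadj : ∀ v ∈ M, BSadj σ θ v ∈ M) {v : Hardy E × E} (hv : v ∈ M) :
    ((0 : Hardy E), v.2) ∈ M := by
  have h := M.sub_mem (hBadj _ (hB _ hv)) hv
  rw [BSadj_BS, add_sub_cancel_left] at h
  exact (M.smul_mem_iff (pow_ne_zero 2 (Complex.ofReal_ne_zero.mpr hσ))).mp h

lemma inclOp_prod_mem (hσ : σ ≠ 0) (hB : ∀ v ∈ M, BS σ θ v ∈ M) {y : E}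
    (hy : ((0 : Hardy E), y) ∈ M) : (inclOp y, (0 : E)) ∈ M := by
  have h := M.sub_mem (hB _ hy) (M.smul_mem (Complex.exp (θ * I)) hy)
  rw [BS_zero_prod, add_sub_cancel_right] at h
  exact (M.smul_mem_iff (Complex.ofReal_ne_zero.mpr hσ)).mp h

end Brownian

theorem reducing_splits_general
    (σ θ : ℝ) (hσ : 0 < σ)
    (M : Submodule ℂ (Hardy E × E))
    (hB : ∀ v ∈ M, BS σ θ v ∈ M) (hBadj : ∀ v ∈ M, BSadj σ θ v ∈ M)
    (f : Hardy E) (x : E) (hfx : (f, x) ∈ M) :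
    ((0 : Hardy E), x) ∈ M ∧ (inclOp x, (0 : E)) ∈ M ∧ (f, (0 : E)) ∈ M := by
  have h0x : ((0 : Hardy E), x) ∈ M := zero_prod_mem_of_reducing M hσ.ne' hB hBadj hfx
  exact ⟨h0x, inclOp_prod_mem M hσ.ne' hB h0x, by simpa using M.sub_mem hfx h0x⟩

/-- Key step of the reducing subspace theorem: if `M` reduces the Brownian shift
(invariant under `B` and `B^*`) and `(f, x) ∈ M`, then `(0, x)`, `(x, 0)` (with `x`
viewed as a constant function) and `(f, 0)` all lie in `M`. -/
theorem reducing_splits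
    (σ θ : ℝ) (hσ : 0 < σ) (hθ : θ ∈ Set.Ico 0 (2 * Real.pi))
    (M : Submodule ℂ (Hardy E × E)) (hMc : IsClosed (M : Set (Hardy E × E)))
    (hB : ∀ v ∈ M, BS σ θ v ∈ M) (hBadj : ∀ v ∈ M, BSadj σ θ v ∈ M)
    (f : Hardy E) (x : E) (hfx : (f, x) ∈ M) :
    ((0 : Hardy E), x) ∈ M ∧ (inclOp x, (0 : E)) ∈ M ∧ (f, (0 : E)) ∈ M :=
  reducing_splits_general σ θ hσ M hB hBadj f x hfx
end
end

section
/- Let $\theta_1, \theta_2 \in [0, 2\pi)$, $\sigma_1, \sigma_2 > 0$, and let $\mathcal{M}_j$ be Type II invariant subspaces of $B_{\sigma_j, e^{i\theta_j}}$ on $H^2(\mathbb{T}) \oplus \mathbb{C}$ with canonical representations $\mathcal{M}_j = \mathbb{C}(g_j, 1) \oplus (\varphi_j H^2(\mathbb{T}) \oplus \{0\})$, where $g_j = \sigma_j(\overline{\varphi_j(e^{i\theta_j})}\varphi_j - 1)/(z - e^{i\theta_j})$. If there is a unitary $U : \mathcal{M}_1 \to \mathcal{M}_2$ with $U B_{\sigma_1,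 e^{i\theta_1}}|_{\mathcal{M}_1} = B_{\sigma_2, e^{i\theta_2}}|_{\mathcal{M}_2} U$, then $\theta_1 = \theta_2$ and $\sigma_2^2(1 + \|g_1\|^2) = \sigma_1^2(1 + \|g_2\|^2)$. -/
open Complex

noncomputable section
set_option linter.unusedSectionVars false

variable {E : Type*} [NormedAddCommGroup E] [InnerProductSpace ℂ E] [CompleteSpace E]

/-- The Hilbert space direct sum `H²_E(𝕋) ⊕ E` (with the ℓ²-norm on the pair). -/
abbrev HardyPair (E : Type*) [NormedAddCommGroup E] [InnerProductSpace ℂ E] [CompleteSpace E] :=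
  WithLp 2 (Hardy E × E)

/-- Build an element of `H²_E(𝕋) ⊕ E` from its two components. -/
def mkPair (f : Hardy E) (y : E) : HardyPair E := (WithLp.equiv 2 (Hardy E × E)).symm (f, y)

/-- First component of an element of `H²_E(𝕋) ⊕ E`. -/
def pr1 (v : HardyPair E) : Hardy E := (WithLp.equiv 2 (Hardy E × E) v).1

/-- Second component of an element of `H²_E(𝕋) ⊕ E`. -/
def pr2 (v : HardyPair E) : E := (WithLp.equiv 2 (Hardy E × E) v).2

/-- The Brownian shift `B^E_{σ, e^{iθ}}` on the Hilbert space `H²_E(𝕋) ⊕ E`: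
`(f, y) ↦ (zf + σy, e^{iθ} y)`. -/
def BW (σ θ : ℝ) (v : HardyPair E) : HardyPair E :=
  mkPair (shiftOp (pr1 v) + (σ : ℂ) • inclOp (pr2 v)) (Complex.exp (θ * I) • pr2 v)

/-- Embedding `h ↦ (Φh, 0)` of `H²(𝕋)` into `H²(𝕋) ⊕ ℂ`. -/
def rangeEmb (T : Hardy ℂ →L[ℂ] Hardy ℂ) : Hardy ℂ →ₗ[ℂ] HardyPair ℂ :=
  ((WithLp.linearEquiv 2 ℂ (Hardy ℂ × ℂ)).symm.toLinearMap).comp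
    (LinearMap.prod T.toLinearMap (0 : Hardy ℂ →ₗ[ℂ] ℂ))

/-! In the coordinates `c • (g, 1) + (T h, 0)` of a Type II subspace `M`, the Brownian shift
acts by `(c, h) ↦ (e^{iθ} c, σ conj(w) c + z h)`. Hence `P = (g, 1)` is orthogonal to
`(B - e^{iθ}) M`, while a vector `c' • P + (T f, 0)` orthogonal to `(B - μ) M` with `|μ| = 1`
has `f (n + 1) = conj μ f n`, so `f = 0`, and `c' = 0` unless `μ = e^{iθ}`. A unitary
intertwiner preserves these orthogonality relations, so `U P₁ = a • P₂` with `a ≠ 0`, which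
forces `θ₁ = θ₂`. Since `(B - e^{iθ}) P = (σ conj(w) T 1, 0)` has norm `|σ|`, comparing norms
gives `|σ₁| = |a| |σ₂|` and `‖P₁‖ = |a| ‖P₂‖`; eliminating `|a|` yields the identity. -/

open scoped ENNReal InnerProductSpace ComplexConjugate

lemma lp.eq_zero_of_norm_apply_succ {F : Type*} [NormedAddCommGroup F] {p : ℝ≥0∞}
    (hp : 0 < p.toReal) (f : lp (fun _ : ℕ => F) p) (hf : ∀ n, ‖f (n + 1)‖ = ‖f n‖) : f = 0 := by
  have hconst : ∀ n, ‖f n‖ = ‖f 0‖ := fun n => by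
    induction n with
    | zero => rfl
    | succ n ih => rw [hf, ih]
  have hsum := (lp.memℓp f).summable hp
  simp only [hconst, summable_const_iff] at hsum
  have h0 : ‖f 0‖ = 0 := by simpa [hp.ne'] using hsum
  exact lp.ext (funext fun n => norm_eq_zero.mp ((hconst n).trans h0))

lemma Submodule.mem_span_singleton_sup_range {R M N : Type*} [Semiring R] [AddCommMonoid M]
    [Module R M] [AddCommMonoid N] [Module R N] (x : M) (L : N →ₗ[R] M) (v : M) :
    v ∈ span R {x} ⊔ LinearMap.range L ↔ ∃ (c : R) (h : N), c • x + L h = v := by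
  simp only [mem_sup, mem_span_singleton, LinearMap.mem_range]
  constructor
  · rintro ⟨_, ⟨c, rfl⟩, _, ⟨h, rfl⟩, rfl⟩
    exact ⟨c, h, rfl⟩
  · rintro ⟨c, h, rfl⟩
    exact ⟨_, ⟨c, rfl⟩, _, ⟨h, rfl⟩, rfl⟩

section Intertwining

variable {F : Type*} [NormedAddCommGroup F] [InnerProductSpace ℂ F] {M₁ M₂ : Submodule ℂ F}
  {A₁ A₂ : F → F}

lemma LinearIsometryEquiv.coe_map_sub_smul_of_intertwines (hA₁ : ∀ v ∈ M₁, A₁ v ∈ M₁)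
    (U : M₁ ≃ₗᵢ[ℂ] M₂) (hU : ∀ v (hv : v ∈ M₁), (U ⟨A₁ v, hA₁ v hv⟩ : F) = A₂ (U ⟨v, hv⟩))
    (μ : ℂ) (x : M₁) :
    (U (⟨A₁ x, hA₁ x x.2⟩ - μ • x) : F) = A₂ (U x) - μ • (U x : F) := by
  rw [map_sub, map_smul, Submodule.coe_sub, Submodule.coe_smul, hU]

lemma LinearIsometryEquiv.inner_sub_smul_eq_zero_of_intertwines (hA₁ : ∀ v ∈ M₁, A₁ v ∈ M₁)
    (U : M₁ ≃ₗᵢ[ℂ] M₂) (hU : ∀ v (hv : v ∈ M₁), (U ⟨A₁ v, hA₁ v hv⟩ : F) = A₂ (U ⟨v, hv⟩))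
    (μ : ℂ) (x : M₁) (hx : ∀ v ∈ M₁, ⟪A₁ v - μ • v, (x : F)⟫_ℂ = 0) (u : F) (hu : u ∈ M₂) :
    ⟪A₂ u - μ • u, (U x : F)⟫_ℂ = 0 := by
  obtain ⟨y, hy⟩ := U.surjective ⟨u, hu⟩
  rw [show u = U y from congrArg Subtype.val hy.symm, ← U.coe_map_sub_smul_of_intertwines hA₁ hU,
    ← Submodule.coe_inner, U.inner_map_map]
  exact hx y y.2

lemma LinearIsometryEquiv.norm_sub_smul_of_intertwines (hA₁ : ∀ v ∈ M₁, A₁ v ∈ M₁)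
    (U : M₁ ≃ₗᵢ[ℂ] M₂) (hU : ∀ v (hv : v ∈ M₁), (U ⟨A₁ v, hA₁ v hv⟩ : F) = A₂ (U ⟨v, hv⟩))
    (μ : ℂ) (x : M₁) :
    ‖A₂ (U x) - μ • (U x : F)‖ = ‖A₁ x - μ • (x : F)‖ := by
  rw [← U.coe_map_sub_smul_of_intertwines hA₁ hU, Submodule.norm_coe, U.norm_map]
  rfl

end Intertwining

lemma shiftOp_add (f f' : Hardy E) : shiftOp (f + f') = shiftOp f + shiftOp f' := by
  ext (_ | n)
  · exact (add_zero 0).symm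
  · rfl

lemma shiftOp_smul (c : ℂ) (f : Hardy E) : shiftOp (c • f) = c • shiftOp f := by
  ext (_ | n) <;> simp [shiftOp, shiftSeq]

lemma shiftOp_single (n : ℕ) (y : E) : shiftOp (lp.single 2 n y) = lp.single 2 (n + 1) y := by
  ext (_ | m) <;> simp [shiftOp, shiftSeq, lp.single_apply, Pi.single_apply]

lemma norm_inclOp (y : E) : ‖inclOp y‖ = ‖y‖ :=
  lp.norm_single (E := fun _ : ℕ => E) (p := 2) (by norm_num) 0 y

lemma mkPair_add (f f' : Hardy E) (y y' : E) :
    mkPair (f + f') (y + y') = mkPair f y + mkPair f' y' := rfl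

lemma mkPair_smul (c : ℂ) (f : Hardy E) (y : E) : mkPair (c • f) (c • y) = c • mkPair f y := rfl

lemma norm_mkPair_sq (f : Hardy E) (y : E) : ‖mkPair f y‖ ^ 2 = ‖f‖ ^ 2 + ‖y‖ ^ 2 :=
  WithLp.prod_norm_sq_eq_of_L2 _

lemma norm_mkPair_one_sq (g : Hardy ℂ) : ‖mkPair g 1‖ ^ 2 = ‖g‖ ^ 2 + 1 := by
  rw [norm_mkPair_sq, norm_one, one_pow]

lemma inner_mkPair (f f' : Hardy E) (y y' : E) :
    ⟪mkPair f y, mkPair f' y'⟫_ℂ = ⟪f, f'⟫_ℂ + ⟪y, y'⟫_ℂ :=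
  WithLp.prod_inner_apply _ _

lemma BW_add (σ θ : ℝ) (v v' : HardyPair E) : BW σ θ (v + v') = BW σ θ v + BW σ θ v' := by
  change mkPair (shiftOp (pr1 v + pr1 v') + _ • inclOp (pr2 v + pr2 v')) (_ • (pr2 v + pr2 v')) = _
  rw [shiftOp_add, inclOp, lp.single_add, smul_add, smul_add, add_add_add_comm, mkPair_add]
  rfl

lemma BW_smul (σ θ : ℝ) (c : ℂ) (v : HardyPair E) : BW σ θ (c • v) = c • BW σ θ v := by
  change mkPair (shiftOp (c • pr1 v) + _ • inclOp (c • pr2 v)) (_ • c • pr2 v) = _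
  rw [shiftOp_smul, inclOp, lp.single_smul, smul_comm _ c, smul_comm _ c, ← smul_add, mkPair_smul]
  rfl

lemma rangeEmb_apply (T : Hardy ℂ →L[ℂ] Hardy ℂ) (h : Hardy ℂ) :
    rangeEmb T h = mkPair (T h) 0 := rfl

section TypeII

variable {σ θ : ℝ} {T : Hardy ℂ →L[ℂ] Hardy ℂ} {w : ℂ} {g : Hardy ℂ}

lemma BW_mkPair_one
    (hg : shiftOp g + (σ : ℂ) • inclOp 1 =
      Complex.exp (θ * I) • g + ((σ : ℂ) * conj w) • T (inclOp 1)) :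
    BW σ θ (mkPair g 1) =
      Complex.exp (θ * I) • mkPair g 1 + rangeEmb T (((σ : ℂ) * conj w) • inclOp 1) := by
  change mkPair (shiftOp g + (σ : ℂ) • inclOp 1) (Complex.exp (θ * I) • 1) = _
  rw [hg, rangeEmb_apply, map_smul, ← mkPair_smul, ← mkPair_add, add_zero]

lemma BW_rangeEmb (hTcomm : ∀ h : Hardy ℂ, T (shiftOp h) = shiftOp (T h)) (h : Hardy ℂ) :
    BW σ θ (rangeEmb T h) = rangeEmb T (shiftOp h) := by
  change mkPair (shiftOp (T h) + (σ : ℂ) • inclOp 0) (Complex.exp (θ * I) • 0) = mkPair (T _) 0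
  rw [hTcomm, inclOp, lp.single_zero, smul_zero, smul_zero, add_zero]

lemma BW_sub_smul_typeII (hTcomm : ∀ h : Hardy ℂ, T (shiftOp h) = shiftOp (T h))
    (hg : shiftOp g + (σ : ℂ) • inclOp 1 =
      Complex.exp (θ * I) • g + ((σ : ℂ) * conj w) • T (inclOp 1))
    (μ c : ℂ) (h : Hardy ℂ) :
    BW σ θ (c • mkPair g 1 + rangeEmb T h) - μ • (c • mkPair g 1 + rangeEmb T h) =
      (c * (Complex.exp (θ * I) - μ)) • mkPair g 1 +
        rangeEmb T ((c * (σ * conj w)) • inclOp 1 + shiftOp h - μ • h) := by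
  rw [BW_add, BW_smul, BW_mkPair_one hg, BW_rangeEmb hTcomm, map_sub, map_add, map_smul,
    map_smul, map_smul]
  module

lemma inner_typeII (hTiso : ∀ h : Hardy ℂ, ‖T h‖ = ‖h‖) (hK : ∀ h : Hardy ℂ, ⟪T h, g⟫_ℂ = 0)
    (c a : ℂ) (h f : Hardy ℂ) :
    ⟪c • mkPair g 1 + rangeEmb T h, a • mkPair g 1 + rangeEmb T f⟫_ℂ =
      conj c * a * (‖g‖ ^ 2 + 1) + ⟪h, f⟫_ℂ := by
  have hK' (f : Hardy ℂ) : ⟪g, T f⟫_ℂ = 0 := by rw [← inner_conj_symm, hK, map_zero]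
  have hTinner : ⟪T h, T f⟫_ℂ = ⟪h, f⟫_ℂ :=
    LinearIsometry.inner_map_map ⟨T.toLinearMap, hTiso⟩ h f
  simp only [inner_add_left, inner_add_right, inner_smul_left, inner_smul_right, rangeEmb_apply,
    inner_mkPair, hK, hK', hTinner, inner_zero_left, inner_zero_right]
  simp only [coe_algebraMap, inner_self_eq_norm_sq_to_K, norm_one, ofReal_one, one_pow, add_zero,
    mul_zero, zero_add, add_left_inj]
  ring

lemma inner_BW_sub_exp_smul_mkPair_one_eq_zero
    (hTcomm : ∀ h : Hardy ℂ, T (shiftOp h) = shiftOp (T h))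
    (hg : shiftOp g + (σ : ℂ) • inclOp 1 =
      Complex.exp (θ * I) • g + ((σ : ℂ) * conj w) • T (inclOp 1))
    (hK : ∀ h : Hardy ℂ, ⟪T h, g⟫_ℂ = 0) {v : HardyPair ℂ}
    (hv : v ∈ Submodule.span ℂ {mkPair g 1} ⊔ LinearMap.range (rangeEmb T)) :
    ⟪BW σ θ v - Complex.exp (θ * I) • v, mkPair g 1⟫_ℂ = 0 := by
  obtain ⟨c, h, rfl⟩ := (Submodule.mem_span_singleton_sup_range _ _ _).mp hv
  rw [BW_sub_smul_typeII hTcomm hg, sub_self, mul_zero, zero_smul, zero_add, rangeEmb_apply,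
    inner_mkPair, hK, inner_zero_left, add_zero]

lemma exists_eq_smul_mkPair_one_of_forall_inner_BW_sub_smul_eq_zero
    (hTcomm : ∀ h : Hardy ℂ, T (shiftOp h) = shiftOp (T h))
    (hTiso : ∀ h : Hardy ℂ, ‖T h‖ = ‖h‖)
    (hg : shiftOp g + (σ : ℂ) • inclOp 1 =
      Complex.exp (θ * I) • g + ((σ : ℂ) * conj w) • T (inclOp 1))
    (hK : ∀ h : Hardy ℂ, ⟪T h, g⟫_ℂ = 0) {μ : ℂ} (hμ : ‖μ‖ = 1) {v : HardyPair ℂ}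
    (hv : v ∈ Submodule.span ℂ {mkPair g 1} ⊔ LinearMap.range (rangeEmb T))
    (horth : ∀ u ∈ Submodule.span ℂ {mkPair g 1} ⊔ LinearMap.range (rangeEmb T),
      ⟪BW σ θ u - μ • u, v⟫_ℂ = 0) :
    ∃ a : ℂ, v = a • mkPair g 1 ∧ (a = 0 ∨ μ = Complex.exp (θ * I)) := by
  obtain ⟨a, f, rfl⟩ := (Submodule.mem_span_singleton_sup_range _ _ _).mp hv
  have key (c : ℂ) (h : Hardy ℂ) :=
    horth _ ((Submodule.mem_span_singleton_sup_range _ _ _).mpr ⟨c, h, rfl⟩)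
  simp only [BW_sub_smul_typeII hTcomm hg, inner_typeII hTiso hK] at key
  have hf : f = 0 := by
    refine lp.eq_zero_of_norm_apply_succ (by norm_num) f fun n => ?_
    have hn := key 0 (lp.single 2 n 1)
    simp only [zero_mul, map_zero, zero_smul, zero_add, shiftOp_single, inner_sub_left,
      inner_smul_left, lp.inner_single_left, RCLike.inner_apply, map_one, mul_one,
      sub_eq_zero] at hn
    rw [hn, norm_mul, RCLike.norm_conj, hμ, one_mul]
  subst hf
  have h1 := key 1 0
  rw [inner_zero_right, add_zero, one_mul, map_sub, mul_eq_zero, mul_eq_zero, sub_eq_zero,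
    (starRingEnd ℂ).injective.eq_iff] at h1
  have hg1 : (‖g‖ : ℂ) ^ 2 + 1 ≠ 0 := by
    exact_mod_cast (by positivity : (0 : ℝ) < ‖g‖ ^ 2 + 1).ne'
  refine ⟨a, by rw [map_zero, add_zero], ?_⟩
  rcases h1 with (h | h) | h
  · exact Or.inr h.symm
  · exact Or.inl h
  · exact absurd h hg1

lemma norm_BW_mkPair_one_sub (hTiso : ∀ h : Hardy ℂ, ‖T h‖ = ‖h‖) (hw : ‖w‖ = 1)
    (hg : shiftOp g + (σ : ℂ) • inclOp 1 =
      Complex.exp (θ * I) • g + ((σ : ℂ) * conj w) • T (inclOp 1)) :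
    ‖BW σ θ (mkPair g 1) - Complex.exp (θ * I) • mkPair g 1‖ = |σ| := by
  rw [BW_mkPair_one hg, add_sub_cancel_left, rangeEmb_apply,
    ← sq_eq_sq₀ (norm_nonneg _) (abs_nonneg _), norm_mkPair_sq, hTiso]
  simp [norm_smul, norm_inclOp, hw]

end TypeII

theorem typeII_unitary_equivalence_necessity_general
    (σ₁ σ₂ θ₁ θ₂ : ℝ)
    (hθ₁ : θ₁ ∈ Set.Ico 0 (2 * Real.pi)) (hθ₂ : θ₂ ∈ Set.Ico 0 (2 * Real.pi))
    (T₁ T₂ : Hardy ℂ →L[ℂ] Hardy ℂ)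
    (hT₁iso : ∀ h : Hardy ℂ, ‖T₁ h‖ = ‖h‖) (hT₂iso : ∀ h : Hardy ℂ, ‖T₂ h‖ = ‖h‖)
    (hT₁comm : ∀ h : Hardy ℂ, T₁ (shiftOp h) = shiftOp (T₁ h))
    (hT₂comm : ∀ h : Hardy ℂ, T₂ (shiftOp h) = shiftOp (T₂ h))
    -- the radial limit values `w_j = φ_j(e^{iθ_j})`, of modulus one
    (w₁ w₂ : ℂ) (hw₁ : ‖w₁‖ = 1) (hw₂ : ‖w₂‖ = 1)
    (g₁ g₂ : Hardy ℂ)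
    -- `z g_j + σ_j = e^{iθ_j} g_j + σ_j conj(w_j) φ_j`
    (hg₁ : shiftOp g₁ + (σ₁ : ℂ) • inclOp 1 =
      Complex.exp (θ₁ * I) • g₁ + ((σ₁ : ℂ) * (starRingEnd ℂ) w₁) • T₁ (inclOp 1))
    (hg₂ : shiftOp g₂ + (σ₂ : ℂ) • inclOp 1 =
      Complex.exp (θ₂ * I) • g₂ + ((σ₂ : ℂ) * (starRingEnd ℂ) w₂) • T₂ (inclOp 1))
    -- `g_j` lies in the model space `𝒦_{φ_j}`
    (hK₁ : ∀ h : Hardy ℂ, inner (𝕜 := ℂ) (T₁ h) g₁ = 0)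
    (hK₂ : ∀ h : Hardy ℂ, inner (𝕜 := ℂ) (T₂ h) g₂ = 0)
    (M₁ M₂ : Submodule ℂ (HardyPair ℂ))
    (hM₁ : M₁ = Submodule.span ℂ {mkPair g₁ 1} ⊔ LinearMap.range (rangeEmb T₁))
    (hM₂ : M₂ = Submodule.span ℂ {mkPair g₂ 1} ⊔ LinearMap.range (rangeEmb T₂))
    (hinv₁ : ∀ v ∈ M₁, BW σ₁ θ₁ v ∈ M₁)
    (U : M₁ ≃ₗᵢ[ℂ] M₂)
    (hU : ∀ (v : HardyPair ℂ) (hv : v ∈ M₁),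
      ((U ⟨BW σ₁ θ₁ v, hinv₁ v hv⟩ : M₂) : HardyPair ℂ) =
        BW σ₂ θ₂ ((U ⟨v, hv⟩ : M₂) : HardyPair ℂ)) :
    θ₁ = θ₂ ∧ σ₂ ^ 2 * (1 + ‖g₁‖ ^ 2) = σ₁ ^ 2 * (1 + ‖g₂‖ ^ 2) := by
  subst hM₁ hM₂
  have hP₁ : mkPair g₁ 1 ∈ Submodule.span ℂ {mkPair g₁ 1} ⊔ LinearMap.range (rangeEmb T₁) :=
    Submodule.mem_sup_left (Submodule.mem_span_singleton_self _)
  obtain ⟨a, hUP₁, hζ⟩ := exists_eq_smul_mkPair_one_of_forall_inner_BW_sub_smul_eq_zero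
    hT₂comm hT₂iso hg₂ hK₂ (norm_exp_ofReal_mul_I θ₁) (U ⟨_, hP₁⟩).2
    (U.inner_sub_smul_eq_zero_of_intertwines hinv₁ hU _ ⟨_, hP₁⟩
      fun _ hv => inner_BW_sub_exp_smul_mkPair_one_eq_zero hT₁comm hg₁ hK₁ hv)
  have hnorm : ‖a • mkPair g₂ 1‖ = ‖mkPair g₁ 1‖ := by
    rw [← hUP₁, Submodule.norm_coe, U.norm_map]
    rfl
  have ha : a ≠ 0 := by
    rintro rfl
    have h := norm_mkPair_one_sq g₁
    rw [← hnorm, zero_smul, norm_zero] at h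
    nlinarith [sq_nonneg ‖g₁‖]
  have hθ : θ₁ = θ₂ := Circle.exp_injOn_Ico (by simp) hθ₁ hθ₂
    (Subtype.ext (by simpa [Circle.coe_exp] using hζ.resolve_left ha))
  subst hθ
  have hσ : |σ₁| = ‖a‖ * |σ₂| := by
    have h := U.norm_sub_smul_of_intertwines hinv₁ hU (Complex.exp (θ₁ * I)) ⟨_, hP₁⟩
    rwa [hUP₁, BW_smul, smul_comm, ← smul_sub, norm_smul, norm_BW_mkPair_one_sub hT₂iso hw₂ hg₂,
      norm_BW_mkPair_one_sub hT₁iso hw₁ hg₁, eq_comm] at h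
  have hg : ‖g₁‖ ^ 2 + 1 = ‖a‖ ^ 2 * (‖g₂‖ ^ 2 + 1) := by
    rw [← norm_mkPair_one_sq, ← hnorm, norm_smul, mul_pow, norm_mkPair_one_sq]
  refine ⟨rfl, ?_⟩
  rw [← sq_abs σ₁, ← sq_abs σ₂, hσ, add_comm 1, hg]
  ring

/-- Necessity part of the scalar unitary-equivalence theorem for Type II invariant
subspaces: if the restrictions of `B_{σ₁,e^{iθ₁}}` and `B_{σ₂,e^{iθ₂}}` to the canonical
Type II invariant subspaces `M_j = ℂ(g_j,1) ⊕ (φ_j H² ⊕ {0})`, with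
`g_j = σ_j(conj(φ_j(e^{iθ_j}))φ_j - 1)/(z - e^{iθ_j})`, are unitarily equivalent, then
`θ₁ = θ₂` and `σ₂²(1 + ‖g₁‖²) = σ₁²(1 + ‖g₂‖²)`. -/
theorem typeII_unitary_equivalence_necessity
    (σ₁ σ₂ θ₁ θ₂ : ℝ) (hσ₁ : 0 < σ₁) (hσ₂ : 0 < σ₂)
    (hθ₁ : θ₁ ∈ Set.Ico 0 (2 * Real.pi)) (hθ₂ : θ₂ ∈ Set.Ico 0 (2 * Real.pi))
    (T₁ T₂ : Hardy ℂ →L[ℂ] Hardy ℂ)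
    (hT₁iso : ∀ h : Hardy ℂ, ‖T₁ h‖ = ‖h‖) (hT₂iso : ∀ h : Hardy ℂ, ‖T₂ h‖ = ‖h‖)
    (hT₁comm : ∀ h : Hardy ℂ, T₁ (shiftOp h) = shiftOp (T₁ h))
    (hT₂comm : ∀ h : Hardy ℂ, T₂ (shiftOp h) = shiftOp (T₂ h))
    -- the radial limit values `w_j = φ_j(e^{iθ_j})`, of modulus one
    (w₁ w₂ : ℂ) (hw₁ : ‖w₁‖ = 1) (hw₂ : ‖w₂‖ = 1)
    (g₁ g₂ : Hardy ℂ)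
    -- `z g_j + σ_j = e^{iθ_j} g_j + σ_j conj(w_j) φ_j`
    (hg₁ : shiftOp g₁ + (σ₁ : ℂ) • inclOp 1 =
      Complex.exp (θ₁ * I) • g₁ + ((σ₁ : ℂ) * (starRingEnd ℂ) w₁) • T₁ (inclOp 1))
    (hg₂ : shiftOp g₂ + (σ₂ : ℂ) • inclOp 1 =
      Complex.exp (θ₂ * I) • g₂ + ((σ₂ : ℂ) * (starRingEnd ℂ) w₂) • T₂ (inclOp 1))
    -- `g_j` lies in the model space `𝒦_{φ_j}`
    (hK₁ : ∀ h : Hardy ℂ, inner (𝕜 := ℂ) (T₁ h) g₁ = 0)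
    (hK₂ : ∀ h : Hardy ℂ, inner (𝕜 := ℂ) (T₂ h) g₂ = 0)
    (M₁ M₂ : Submodule ℂ (HardyPair ℂ))
    (hM₁ : M₁ = Submodule.span ℂ {mkPair g₁ 1} ⊔ LinearMap.range (rangeEmb T₁))
    (hM₂ : M₂ = Submodule.span ℂ {mkPair g₂ 1} ⊔ LinearMap.range (rangeEmb T₂))
    (hinv₁ : ∀ v ∈ M₁, BW σ₁ θ₁ v ∈ M₁) (hinv₂ : ∀ v ∈ M₂, BW σ₂ θ₂ v ∈ M₂)
    (U : M₁ ≃ₗᵢ[ℂ] M₂)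
    (hU : ∀ (v : HardyPair ℂ) (hv : v ∈ M₁),
      ((U ⟨BW σ₁ θ₁ v, hinv₁ v hv⟩ : M₂) : HardyPair ℂ) =
        BW σ₂ θ₂ ((U ⟨v, hv⟩ : M₂) : HardyPair ℂ)) :
    θ₁ = θ₂ ∧ σ₂ ^ 2 * (1 + ‖g₁‖ ^ 2) = σ₁ ^ 2 * (1 + ‖g₂‖ ^ 2) :=
  typeII_unitary_equivalence_necessity_general σ₁ σ₂ θ₁ θ₂ hθ₁ hθ₂ T₁ T₂ hT₁iso hT₂iso hT₁comm
    hT₂comm w₁ w₂ hw₁ hw₂ g₁ g₂ hg₁ hg₂ hK₁ hK₂ M₁ M₂ hM₁ hM₂ hinv₁ U hU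
end
end
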